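/- Let Ω ⊆ ℝ² be open, g ∈ ℝ, let Ψ : Ω → ℝ be three times continuously differentiable, P : Ω → ℝ twice continuously differentiable, and ρ : ℝ → ℝ twice continuously differentiable. Suppose that at every point (x, y) ∈ Ω: Ψ_y Ψ_{xy} − Ψ_x Ψ_{yy} = −P_x and Ψ_x Ψ_{xy} − Ψ_y Ψ_{xx} = −P_y − g·ρ(−Ψ). Then the function V := ΔΨ − g·y·ρ′(−Ψ) satisfies Ψ_y V_x − Ψ_x V_y = 0 at every point of Ω, i.e. ∇^⊥Ψ · ∇(ΔΨ − g y ρ′(−Ψ)) = 0 on Ω. -/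

import Mathlib

/-!
Differentiating the first momentum equation in `y`, the second in `x`, and subtracting eliminates
the pressure (`P_xy = P_yx`); after commuting third derivatives of `Ψ` what is left is the
vorticity equation `Ψ_y (ΔΨ)_x - Ψ_x (ΔΨ)_y = ∂_x (g ρ(-Ψ)) = -g ρ'(-Ψ) Ψ_x`. In
`∇^⊥Ψ · ∇(g y ρ'(-Ψ))` the `ρ''` terms cancel and only `-g ρ'(-Ψ) Ψ_x`, coming from `∂_y y = 1`,
survives, which is exactly the right-hand side of the vorticity equation.
-/

/-- Partial derivative in the horizontal direction `x`. -/
noncomputable def pd1 (f : ℝ × ℝ → ℝ) (p : ℝ × ℝ) : ℝ := fderiv ℝ f p (1, 0)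

/-- Partial derivative in the vertical direction `y`. -/
noncomputable def pd2 (f : ℝ × ℝ → ℝ) (p : ℝ × ℝ) : ℝ := fderiv ℝ f p (0, 1)

/-- Laplacian of a function on `ℝ²`. -/
noncomputable def lap (f : ℝ × ℝ → ℝ) (p : ℝ × ℝ) : ℝ :=
  pd1 (pd1 f) p + pd2 (pd2 f) p

open Filter Topology

section DirectionalDerivative

variable {𝕜 E : Type*} [NontriviallyNormedField 𝕜] [NormedAddCommGroup E] [NormedSpace 𝕜 E]
  {f g : E → 𝕜} {x : E}

theorem ContDiffAt.fderiv_apply_const {m n : WithTop ℕ∞} (hf : ContDiffAt 𝕜 n f x)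
    (hmn : m + 1 ≤ n) (v : E) : ContDiffAt 𝕜 m (fun y => fderiv 𝕜 f y v) x :=
  (hf.fderiv_right hmn).clm_apply contDiffAt_const

theorem fderiv_fun_mul_apply (hf : DifferentiableAt 𝕜 f x) (hg : DifferentiableAt 𝕜 g x)
    (v : E) : fderiv 𝕜 (fun y => f y * g y) x v = f x * fderiv 𝕜 g x v + g x * fderiv 𝕜 f x v := by
  simp [fderiv_fun_mul hf hg]

theorem fderiv_comp_neg_apply {F : 𝕜 → 𝕜} (hF : DifferentiableAt 𝕜 F (-f x))
    (hf : DifferentiableAt 𝕜 f x) (v : E) :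
    fderiv 𝕜 (fun y => F (-f y)) x v = -(deriv F (-f x) * fderiv 𝕜 f x v) := by
  rw [HasFDerivAt.fderiv (f := fun y => F (-f y))
    (hF.hasDerivAt.comp_hasFDerivAt x hf.hasFDerivAt.neg)]
  simp

end DirectionalDerivative

theorem fderiv_fderiv_apply_comm {E : Type*} [NormedAddCommGroup E] [NormedSpace ℝ E]
    {f : E → ℝ} {x : E} (hf : ContDiffAt ℝ 2 f x) (v w : E) :
    fderiv ℝ (fun y => fderiv ℝ f y v) x w = fderiv ℝ (fun y => fderiv ℝ f y w) x v := by
  have hdf : DifferentiableAt ℝ (fderiv ℝ f) x :=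
    (hf.fderiv_right (m := 1) (by norm_num)).differentiableAt one_ne_zero
  simp only [fderiv_clm_apply hdf (differentiableAt_const _), fderiv_fun_const, Pi.zero_apply,
    ContinuousLinearMap.comp_zero, zero_add, ContinuousLinearMap.flip_apply]
  exact hf.isSymmSndFDerivAt (by simp) w v

section PartialDerivatives

variable {f : ℝ × ℝ → ℝ} {p : ℝ × ℝ}

theorem ContDiffAt.pd1 {m n : WithTop ℕ∞} (hf : ContDiffAt ℝ n f p) (hmn : m + 1 ≤ n) :
    ContDiffAt ℝ m (pd1 f) p :=
  hf.fderiv_apply_const hmn (1, 0)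

theorem ContDiffAt.pd2 {m n : WithTop ℕ∞} (hf : ContDiffAt ℝ n f p) (hmn : m + 1 ≤ n) :
    ContDiffAt ℝ m (pd2 f) p :=
  hf.fderiv_apply_const hmn (0, 1)

theorem pd1_pd2_comm (hf : ContDiffAt ℝ 2 f p) : pd1 (pd2 f) p = pd2 (pd1 f) p :=
  fderiv_fderiv_apply_comm hf (0, 1) (1, 0)

theorem pd2_pd2_pd1 (hf : ContDiffAt ℝ 3 f p) : pd2 (pd2 (pd1 f)) p = pd1 (pd2 (pd2 f)) p := by
  have hmixed : pd2 (pd1 f) =ᶠ[𝓝 p] pd1 (pd2 f) := by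
    filter_upwards [hf.eventually (by simp)] with q hq
    exact (pd1_pd2_comm (hq.of_le (by norm_num))).symm
  calc pd2 (pd2 (pd1 f)) p = pd2 (pd1 (pd2 f)) p := by simp only [pd2, hmixed.fderiv_eq]
    _ = pd1 (pd2 (pd2 f)) p := (pd1_pd2_comm (hf.pd2 (by norm_num))).symm

theorem ContDiffAt.lap {m n : WithTop ℕ∞} (hf : ContDiffAt ℝ n f p) (hmn : m + 2 ≤ n) :
    ContDiffAt ℝ m (lap f) p := by
  rw [← one_add_one_eq_two, ← add_assoc] at hmn
  exact ((hf.pd1 hmn).pd1 le_rfl).add ((hf.pd2 hmn).pd2 le_rfl)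

theorem fderiv_lap_apply (hf : ContDiffAt ℝ 3 f p) (v : ℝ × ℝ) :
    fderiv ℝ (lap f) p v = fderiv ℝ (pd1 (pd1 f)) p v + fderiv ℝ (pd2 (pd2 f)) p v := by
  have h11 := ((hf.pd1 (m := 2) (by norm_num)).pd1 le_rfl).differentiableAt one_ne_zero
  have h22 := ((hf.pd2 (m := 2) (by norm_num)).pd2 le_rfl).differentiableAt one_ne_zero
  change fderiv ℝ (fun q => pd1 (pd1 f) q + pd2 (pd2 f) q) p v = _
  rw [fderiv_fun_add h11 h22]
  rfl

end PartialDerivatives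

theorem vorticity_eq_of_momentum_eq {Ψ P F : ℝ × ℝ → ℝ} {p : ℝ × ℝ}
    (hΨ : ContDiffAt ℝ 3 Ψ p) (hP : ContDiffAt ℝ 2 P p) (hF : DifferentiableAt ℝ F p)
    (h1 : ∀ᶠ q in 𝓝 p, pd2 Ψ q * pd2 (pd1 Ψ) q - pd1 Ψ q * pd2 (pd2 Ψ) q = -pd1 P q)
    (h2 : ∀ᶠ q in 𝓝 p, pd1 Ψ q * pd2 (pd1 Ψ) q - pd2 Ψ q * pd1 (pd1 Ψ) q = -pd2 P q - F q) :
    pd2 Ψ p * pd1 (lap Ψ) p - pd1 Ψ p * pd2 (lap Ψ) p = pd1 F p := by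
  have hΨ1 : ContDiffAt ℝ 2 (pd1 Ψ) p := hΨ.pd1 (by norm_num)
  have hΨ2 : ContDiffAt ℝ 2 (pd2 Ψ) p := hΨ.pd2 (by norm_num)
  have d1 := hΨ1.differentiableAt two_ne_zero
  have d2 := hΨ2.differentiableAt two_ne_zero
  have d11 := (hΨ1.pd1 (m := 1) (by norm_num)).differentiableAt one_ne_zero
  have d12 := (hΨ1.pd2 (m := 1) (by norm_num)).differentiableAt one_ne_zero
  have d22 := (hΨ2.pd2 (m := 1) (by norm_num)).differentiableAt one_ne_zero
  have dP2 := (hP.pd2 (m := 1) (by norm_num)).differentiableAt one_ne_zero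
  have E1 := DFunLike.congr_fun (Filter.EventuallyEq.fderiv_eq (𝕜 := ℝ) h1) (0, 1)
  have E2 := DFunLike.congr_fun (Filter.EventuallyEq.fderiv_eq (𝕜 := ℝ) h2) (1, 0)
  simp only [fderiv_fun_sub (d2.fun_mul d12) (d1.fun_mul d22), fderiv_fun_neg,
    fderiv_fun_mul_apply d2 d12, fderiv_fun_mul_apply d1 d22, sub_apply, neg_apply] at E1
  simp only [fderiv_fun_sub (d1.fun_mul d12) (d2.fun_mul d11), fderiv_fun_sub dP2.fun_neg hF,
    fderiv_fun_neg, fderiv_fun_mul_apply d1 d12, fderiv_fun_mul_apply d2 d11, sub_apply,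
    neg_apply] at E2
  simp only [pd1, pd2, fderiv_lap_apply hΨ]
  simp only [← pd1.eq_1, ← pd2.eq_1] at E1 E2 ⊢
  rw [pd2_pd2_pd1 hΨ] at E1
  rw [pd1_pd2_comm hΨ1, pd1_pd2_comm (hΨ.of_le (by norm_num)), pd1_pd2_comm hP] at E2
  linear_combination E1 - E2

/-- If `Ψ` satisfies the stream-function form of the momentum equations with
density `ρ(−Ψ)`, then `V := ΔΨ − g·y·ρ′(−Ψ)` is constant along streamlines:
`Ψ_y V_x − Ψ_x V_y = 0`, i.e. `∇^⊥Ψ · ∇(ΔΨ − g y ρ′(−Ψ)) = 0` on `Ω`. -/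
theorem stmt_6 (Ω : Set (ℝ × ℝ)) (hΩ : IsOpen Ω) (g : ℝ)
    (Ψ : ℝ × ℝ → ℝ) (hΨ : ContDiffOn ℝ 3 Ψ Ω)
    (P : ℝ × ℝ → ℝ) (hP : ContDiffOn ℝ 2 P Ω)
    (ρ : ℝ → ℝ) (hρ : ContDiff ℝ 2 ρ)
    (heq1 : ∀ p ∈ Ω, pd2 Ψ p * pd2 (pd1 Ψ) p - pd1 Ψ p * pd2 (pd2 Ψ) p = -(pd1 P p))
    (heq2 : ∀ p ∈ Ω, pd1 Ψ p * pd2 (pd1 Ψ) p - pd2 Ψ p * pd1 (pd1 Ψ) p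
      = -(pd2 P p) - g * ρ (-(Ψ p)))
    (V : ℝ × ℝ → ℝ)
    (hV : V = fun p => lap Ψ p - g * p.2 * deriv ρ (-(Ψ p))) :
    ∀ p ∈ Ω, pd2 Ψ p * pd1 V p - pd1 Ψ p * pd2 V p = 0 := by
  subst hV
  intro p hp
  have hΨp : ContDiffAt ℝ 3 Ψ p := hΨ.contDiffAt (hΩ.mem_nhds hp)
  have dΨ : DifferentiableAt ℝ Ψ p := hΨp.differentiableAt (by norm_num)
  have dρ : DifferentiableAt ℝ ρ (-Ψ p) := hρ.differentiable (by norm_num) _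
  have dρ' : DifferentiableAt ℝ (deriv ρ) (-Ψ p) := hρ.differentiable_deriv_two _
  have dρΨ : DifferentiableAt ℝ (fun q => ρ (-Ψ q)) p := dρ.comp p dΨ.neg
  have dρ'Ψ : DifferentiableAt ℝ (fun q => deriv ρ (-Ψ q)) p :=
    DifferentiableAt.comp (g := deriv ρ) p dρ' dΨ.neg
  have dy : DifferentiableAt ℝ (fun q : ℝ × ℝ => g * q.2) p := differentiableAt_snd.const_mul g
  have dlap : DifferentiableAt ℝ (lap Ψ) p :=
    (hΨp.lap (m := 1) (by norm_num)).differentiableAt one_ne_zero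
  have hvort := vorticity_eq_of_momentum_eq hΨp (hP.contDiffAt (hΩ.mem_nhds hp))
    (dρΨ.const_mul g) (eventually_of_mem (hΩ.mem_nhds hp) heq1)
    (eventually_of_mem (hΩ.mem_nhds hp) heq2)
  simp only [pd1, pd2, fderiv_fun_sub dlap (dy.fun_mul dρ'Ψ), fderiv_fun_mul_apply dy dρ'Ψ,
    fderiv_const_mul dρΨ, fderiv_const_mul (differentiableAt_snd (𝕜 := ℝ) (p := p)),
    fderiv_snd, fderiv_comp_neg_apply dρ dΨ, fderiv_comp_neg_apply dρ' dΨ, sub_apply,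
    smul_apply, ContinuousLinearMap.coe_snd', smul_eq_mul] at hvort ⊢
  linear_combination hvort
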